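/- The weighted Poisson-binomial characteristic function modulus is bounded by a Gaussian envelope on the common central lobe: for independent Bernoulli(p_d) variables with weights w_d > 0, and for |\omega| \le \pi / max_d w_d, one has |\phi_{WPB}(\omega)| \le exp(-(2\sigma^2/\pi^2)\omega^2) where \sigma^2 = \sum_{d=1}^D p_d(1-p_d) w_d^2 is the variance of the sum. -/

import Mathlib

/-!
Each factor `(1 - p) + p e^{iθ}` of the characteristic function has squared modulus
`1 - 2p(1-p)(1 - cos θ) ≤ exp(-2p(1-p)(1 - cos θ))`, and on `|θ| ≤ π` the Jordan-type bound
`1 - cos θ ≥ 2θ²/π²` turns this into `exp(-(4p(1-p)/π²) θ²)`. On the common central lobe every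
`θ = ω w_d` satisfies `|θ| ≤ π`, and multiplying the per-factor bounds adds the exponents,
which sum to the variance `σ²` times `ω²`.
-/

open Real

lemma norm_sq_one_sub_add_mul_exp_mul_I (p θ : ℝ) :
    ‖(1 - p : ℂ) + p * Complex.exp (Complex.I * θ)‖ ^ 2
      = 1 - 2 * (p * (1 - p)) * (1 - cos θ) := by
  rw [Complex.sq_norm, mul_comm Complex.I, Complex.exp_mul_I, ← Complex.ofReal_cos,
    ← Complex.ofReal_sin]
  have hsplit : (1 - p : ℂ) + p * (cos θ + sin θ * Complex.I)
      = ((1 - p + p * cos θ : ℝ) : ℂ) + ((p * sin θ : ℝ) : ℂ) * Complex.I := by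
    push_cast; ring
  rw [hsplit, Complex.normSq_add_mul_I]
  linear_combination p ^ 2 * sin_sq_add_cos_sq θ

lemma norm_one_sub_add_mul_exp_mul_I_le {p θ : ℝ} (hp0 : 0 ≤ p) (hp1 : p ≤ 1)
    (hθ : |θ| ≤ π) :
    ‖(1 - p : ℂ) + p * Complex.exp (Complex.I * θ)‖
      ≤ exp (-(2 * (p * (1 - p)) / π ^ 2) * θ ^ 2) := by
  have hvar : 0 ≤ p * (1 - p) := mul_nonneg hp0 (sub_nonneg.2 hp1)
  have hjordan : 2 / π ^ 2 * θ ^ 2 ≤ 1 - cos θ := by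
    linarith [cos_le_one_sub_mul_cos_sq hθ]
  rw [← pow_le_pow_iff_left₀ (norm_nonneg _) (exp_pos _).le two_ne_zero,
    norm_sq_one_sub_add_mul_exp_mul_I, ← exp_nat_mul]
  calc 1 - 2 * (p * (1 - p)) * (1 - cos θ)
      ≤ exp (-(2 * (p * (1 - p)) * (1 - cos θ))) := one_sub_le_exp_neg _
    _ ≤ exp ((2 : ℕ) * (-(2 * (p * (1 - p)) / π ^ 2) * θ ^ 2)) := by
      rw [exp_le_exp, show ((2 : ℕ) : ℝ) * (-(2 * (p * (1 - p)) / π ^ 2) * θ ^ 2)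
        = -(2 * (p * (1 - p)) * (2 / π ^ 2 * θ ^ 2)) by push_cast; ring, neg_le_neg_iff]
      gcongr

lemma abs_mul_le_of_abs_le_div_sup' {ι : Type*} {s : Finset ι} (hs : s.Nonempty)
    {w : ι → ℝ} {i : ι} (hi : i ∈ s) (hwi : 0 < w i) {a ω : ℝ}
    (hω : |ω| ≤ a / s.sup' hs w) :
    |ω * w i| ≤ a := by
  have hwM : w i ≤ s.sup' hs w := s.le_sup' w hi
  have hM : 0 < s.sup' hs w := hwi.trans_le hwM
  have haM : 0 ≤ a / s.sup' hs w := (abs_nonneg ω).trans hω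
  calc |ω * w i| = |ω| * w i := by rw [abs_mul, abs_of_pos hwi]
    _ ≤ a / s.sup' hs w * s.sup' hs w := by gcongr
    _ = a := div_mul_cancel₀ a hM.ne'

/-- Gaussian envelope bound for the weighted Poisson–binomial characteristic
function on the common central lobe `|ω| ≤ π / max_d w_d`:
`|φ_WPB(ω)| ≤ exp(-(2σ²/π²) ω²)` with `σ² = ∑_d p_d(1-p_d) w_d²`. -/
theorem wpb_charFun_gaussian_envelope (D : ℕ) (hD : 0 < D)
    (p w : Fin D → ℝ) (hp0 : ∀ d, 0 ≤ p d) (hp1 : ∀ d, p d ≤ 1)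
    (hw : ∀ d, 0 < w d) (ω : ℝ)
    (hω : |ω| ≤ Real.pi / (Finset.univ.sup' (Finset.univ_nonempty_iff.mpr
            (Fin.pos_iff_nonempty.mp hD)) w)) :
    ‖∏ d, ((1 - p d : ℂ) + p d * Complex.exp (Complex.I * ω * w d))‖
      ≤ Real.exp (-(2 * (∑ d, p d * (1 - p d) * (w d) ^ 2) / Real.pi ^ 2) * ω ^ 2) := by
  have hlobe : ∀ d, |ω * w d| ≤ π := fun d =>
    abs_mul_le_of_abs_le_div_sup' _ (Finset.mem_univ d) (hw d) hω
  rw [norm_prod]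
  calc ∏ d, ‖(1 - p d : ℂ) + p d * Complex.exp (Complex.I * ω * w d)‖
      ≤ ∏ d, exp (-(2 * (p d * (1 - p d)) / π ^ 2) * (ω * w d) ^ 2) := by
        refine Finset.prod_le_prod (fun d _ => norm_nonneg _) fun d _ => ?_
        simpa [mul_assoc] using
          norm_one_sub_add_mul_exp_mul_I_le (hp0 d) (hp1 d) (hlobe d)
    _ = exp (-(2 * (∑ d, p d * (1 - p d) * w d ^ 2) / π ^ 2) * ω ^ 2) := by
        rw [← exp_sum, Finset.mul_sum, Finset.sum_div, ← Finset.sum_neg_distrib,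
          Finset.sum_mul]
        exact congrArg exp (Finset.sum_congr rfl fun d _ => by ring)
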